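/- The function f(p) = (2p − sin 2p)/(8 sin² p) is strictly increasing on the open interval (0, π). -/

import Mathlib

open Real

/-! The derivative of `(2p - sin 2p) / (8 sin² p)` simplifies to `(sin p - p cos p) / (2 sin³ p)`,
and on `(0, π)` both `sin p` and `sin p - p cos p` are positive: the latter is `sin p · (1 - p / tan p)`
with `p < tan p` below `π / 2`, and a sum of positive terms once `cos p ≤ 0`. -/

theorem Real.mul_cos_lt_sin {x : ℝ} (h0 : 0 < x) (hπ : x < π) : x * cos x < sin x := by
  have hsin : 0 < sin x := sin_pos_of_pos_of_lt_pi h0 hπ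
  rcases le_or_gt (cos x) 0 with hcos | hcos
  · nlinarith [mul_nonpos_of_nonneg_of_nonpos h0.le hcos]
  · have hx : x < π / 2 := by
      by_contra! h
      exact hcos.not_ge (cos_nonpos_of_pi_div_two_le_of_le h (by linarith [pi_pos]))
    have := lt_tan h0 hx
    rwa [tan_eq_sin_div_cos, lt_div_iff₀ hcos] at this

theorem Real.hasDerivAt_two_mul_sub_sin_two_mul_div_sin_sq {x : ℝ} (hx : sin x ≠ 0) :
    HasDerivAt (fun p : ℝ => (2 * p - sin (2 * p)) / (8 * sin p ^ 2))
      ((sin x - x * cos x) / (2 * sin x ^ 3)) x := by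
  have hlin : HasDerivAt (fun p : ℝ => 2 * p) 2 x := hasDerivAt_const_mul 2
  have hnum := hlin.fun_sub hlin.sin
  have hden := ((hasDerivAt_sin x).fun_pow 2).const_mul 8
  refine (hnum.div hden (by positivity)).congr_deriv ?_
  rw [cos_two_mul, sin_two_mul]
  field_simp
  norm_num
  ring

/-- The function `p ↦ (2p − sin 2p)/(8 sin² p)` is strictly increasing on `(0, π)`. -/
theorem heisenberg_distance_function_strictMono :
    StrictMonoOn (fun p : ℝ => (2 * p - sin (2 * p)) / (8 * sin p ^ 2))
      (Set.Ioo 0 π) := by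
  have hsin : ∀ x ∈ Set.Ioo 0 π, 0 < sin x := fun x hx => sin_pos_of_pos_of_lt_pi hx.1 hx.2
  have hderiv : ∀ x ∈ Set.Ioo 0 π, HasDerivAt _ _ x := fun x hx =>
    hasDerivAt_two_mul_sub_sin_two_mul_div_sin_sq (hsin x hx).ne'
  refine strictMonoOn_of_hasDerivWithinAt_pos (convex_Ioo 0 π)
    (fun x hx => (hderiv x hx).continuousAt.continuousWithinAt)
    (fun x hx => (hderiv x (interior_subset hx)).hasDerivWithinAt) fun x hx => ?_
  rw [interior_Ioo] at hx
  have hsin_pos := hsin x hx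
  have hnum_pos := sub_pos.2 (mul_cos_lt_sin hx.1 hx.2)
  positivity
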